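/- Suppose the (n+p)×(n+m) system pencil [[A - λE, B],[C, D]] is transformed by constant invertible matrices U (acting on the first n rows) and Z (acting on all columns) into block form [[A₁-λE₁, *, *, *],[0, A₂-λE₂, B₂, *],[0, 0, 0, B₃],[0, C₂, D₂, *]] with A₁-λE₁ of full row rank over F(λ), A₂-λE₂ regular of size n₂, and B₃ square invertible. Then the normal rank r of G(λ) = C(λE-A)⁻¹B + D satisfies r = normal rank of [[A₂-λE₂, B₂],[C₂, D₂]] minus n₂. -/

import Mathlib

set_option synthInstance.maxHeartbeats 1000000

open Matrix

/-- Embed a constant matrix over F into matrices over the rational functions F(λ). -/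
noncomputable def constMat {F : Type*} [Field F] {a b : ℕ}
    (M : Matrix (Fin a) (Fin b) F) : Matrix (Fin a) (Fin b) (RatFunc F) :=
  M.map (algebraMap F (RatFunc F))

/-- The (possibly rectangular) matrix pencil A - λE viewed over F(λ). -/
noncomputable def pencil {F : Type*} [Field F] {a b : ℕ}
    (A E : Matrix (Fin a) (Fin b) F) : Matrix (Fin a) (Fin b) (RatFunc F) :=
  constMat A - (RatFunc.X : RatFunc F) • constMat E

/-! Bordering the regular pencil `A - λE` by `B, C, D` gives a system pencil of normal rank
`n + rank G`: up to the sign of the pencil, `G` is the Schur complement of `A - λE`. The constant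
transformations `U` and `Z` keep this rank. In the reduced form, the full-row-rank block
`A₁ - λE₁` and the invertible block `B₃` each split off their row count, which leaves
`n₁ + n₃ + rank [[A₂ - λE₂, B₂], [C₂, D₂]]`, and `n = n₁ + n₂ + n₃`. -/

theorem Submodule.finrank_prod {K V W : Type*} [Field K] [AddCommGroup V] [Module K V]
    [AddCommGroup W] [Module K W] [FiniteDimensional K V] [FiniteDimensional K W]
    (p : Submodule K V) (q : Submodule K W) :
    Module.finrank K (p.prod q) = Module.finrank K p + Module.finrank K q := by
  let e : p.prod q ≃ₗ[K] p × q :=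
    { toFun := fun x => (⟨x.1.1, x.2.1⟩, ⟨x.1.2, x.2.2⟩)
      invFun := fun y => ⟨(y.1, y.2), y.1.2, y.2.2⟩
      map_add' := fun _ _ => rfl
      map_smul' := fun _ _ => rfl
      left_inv := fun _ => rfl
      right_inv := fun _ => rfl }
  rw [e.finrank_eq, Module.finrank_prod]

namespace Matrix

variable {K : Type*} [Field K] {m₁ m₂ n₁ n₂ : Type*} [Fintype n₁] [Fintype n₂]

theorem mulVecLin_fromBlocks_zero_zero (X : Matrix m₁ n₁ K) (W : Matrix m₂ n₂ K) :
    (fromBlocks X 0 0 W).mulVecLin =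
      (LinearEquiv.sumArrowLequivProdArrow m₁ m₂ K K).symm.toLinearMap ∘ₗ
        X.mulVecLin.prodMap W.mulVecLin ∘ₗ
          (LinearEquiv.sumArrowLequivProdArrow n₁ n₂ K K).toLinearMap := by
  ext v (i | i) <;> simp [fromBlocks_mulVec] <;> rfl

theorem rank_fromBlocks_zero_zero [Fintype m₁] [Fintype m₂] (X : Matrix m₁ n₁ K)
    (W : Matrix m₂ n₂ K) : (fromBlocks X 0 0 W).rank = X.rank + W.rank := by
  rw [rank, mulVecLin_fromBlocks_zero_zero, LinearMap.range_comp, LinearMap.range_comp,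
    LinearEquiv.range, Submodule.map_top, LinearEquiv.finrank_map_eq, LinearMap.range_prodMap,
    Submodule.finrank_prod]
  rfl

theorem exists_mul_eq_one_of_rank_eq_card [Fintype m₁] [DecidableEq m₁] {X : Matrix m₁ n₁ K}
    (hX : X.rank = Fintype.card m₁) : ∃ X' : Matrix n₁ m₁ K, X * X' = 1 := by
  rw [← mulVec_surjective_iff_exists_right_inverse, ← coe_mulVecLin, ← LinearMap.range_eq_top]
  exact Submodule.eq_top_of_finrank_eq (by rw [Module.finrank_fintype_fun_eq_card]; exact hX)

theorem rank_fromBlocks_zero₂₁_of_rank_eq_card [Fintype m₁] [Fintype m₂] (X : Matrix m₁ n₁ K)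
    (Y : Matrix m₁ n₂ K) (W : Matrix m₂ n₂ K) (hX : X.rank = Fintype.card m₁) :
    (fromBlocks X Y 0 W).rank = Fintype.card m₁ + W.rank := by
  classical
  obtain ⟨X', hX'⟩ := exists_mul_eq_one_of_rank_eq_card hX
  have hclear : fromBlocks X Y 0 W * (fromBlocks 1 (-(X' * Y)) 0 1 : Matrix (n₁ ⊕ n₂) _ K) =
      fromBlocks X 0 0 W := by
    simp [fromBlocks_multiply, ← Matrix.mul_assoc, hX']
  rw [← rank_mul_eq_left_of_isUnit_det (fromBlocks 1 (-(X' * Y)) 0 1) _ (by simp), hclear,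
    rank_fromBlocks_zero_zero, hX]

theorem rank_fromBlocks_zero₂₁_of_isUnit_det [Fintype m₁] [Fintype m₂] [DecidableEq m₂]
    (X : Matrix m₁ n₁ K) (Y : Matrix m₁ m₂ K) (W : Matrix m₂ m₂ K) (hW : IsUnit W.det) :
    (fromBlocks X Y 0 W).rank = X.rank + Fintype.card m₂ := by
  classical
  have hclear :
      (fromBlocks 1 (-(Y * W⁻¹)) 0 1 : Matrix (m₁ ⊕ m₂) (m₁ ⊕ m₂) K) * fromBlocks X Y 0 W =
        fromBlocks X 0 0 W := by
    simp [fromBlocks_multiply, Matrix.mul_assoc, nonsing_inv_mul _ hW]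
  rw [← rank_mul_eq_right_of_isUnit_det (fromBlocks 1 (-(Y * W⁻¹)) 0 1) _ (by simp), hclear,
    rank_fromBlocks_zero_zero, rank_of_isUnit _ ((isUnit_iff_isUnit_det W).2 hW)]

theorem rank_fromBlocks_of_isUnit_det₁₁ [Fintype m₁] [Fintype m₂] [DecidableEq m₁]
    (P : Matrix m₁ m₁ K) (B : Matrix m₁ n₂ K) (C : Matrix m₂ m₁ K) (D : Matrix m₂ n₂ K)
    (hP : IsUnit P.det) :
    (fromBlocks P B C D).rank = Fintype.card m₁ + (D - C * P⁻¹ * B).rank := by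
  classical
  let := P.invertibleOfIsUnitDet hP
  rw [fromBlocks_eq_of_invertible₁₁, rank_mul_eq_left_of_isUnit_det _ _ (by simp),
    rank_mul_eq_right_of_isUnit_det _ _ (by simp), rank_fromBlocks_zero_zero,
    rank_of_isUnit _ ((isUnit_iff_isUnit_det P).2 hP), invOf_eq_nonsing_inv]

theorem rank_mul_eq_left_of_mul_eq_one [DecidableEq n₁] (A : Matrix m₁ n₁ K)
    (Z : Matrix n₁ n₂ K) (Z' : Matrix n₂ n₁ K) (hZ : Z * Z' = 1) : (A * Z).rank = A.rank := by
  refine le_antisymm (rank_mul_le_left _ _) ?_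
  calc A.rank = (A * Z * Z').rank := by rw [Matrix.mul_assoc, hZ, Matrix.mul_one]
    _ ≤ (A * Z).rank := rank_mul_le_left _ _

theorem rank_special_klf {r₁ r₂ r₃ r₄ c₁ c₂ c₃ : Type*} [Fintype r₁] [Fintype r₂] [Fintype r₃]
    [Fintype r₄] [Fintype c₁] [Fintype c₂] [Fintype c₃] [DecidableEq r₃]
    (X : Matrix r₁ c₁ K) (Y₁₂ : Matrix r₁ c₂ K) (P : Matrix r₂ c₂ K)
    (Y₁₃ : Matrix r₁ c₃ K) (Y₁₄ : Matrix r₁ r₃ K) (B₂ : Matrix r₂ c₃ K) (Y₂₄ : Matrix r₂ r₃ K)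
    (B₃ : Matrix r₃ r₃ K) (C₂ : Matrix r₄ c₂ K) (D₂ : Matrix r₄ c₃ K) (Y₄₄ : Matrix r₄ r₃ K)
    (hX : X.rank = Fintype.card r₁) (hB₃ : IsUnit B₃.det) :
    (fromBlocks (fromRows (fromBlocks X Y₁₂ 0 P) 0) (fromRows (fromBlocks Y₁₃ Y₁₄ B₂ Y₂₄)
        (fromCols 0 B₃)) (fromCols 0 C₂) (fromCols D₂ Y₄₄)).rank =
      Fintype.card r₁ + Fintype.card r₃ + (fromBlocks P B₂ C₂ D₂).rank := by
  let σ : ((r₁ ⊕ r₂) ⊕ r₃) ⊕ r₄ ≃ (r₁ ⊕ (r₂ ⊕ r₄)) ⊕ r₃ :=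
    { toFun := fun
        | .inl (.inl (.inl i)) => .inl (.inl i)
        | .inl (.inl (.inr i)) => .inl (.inr (.inl i))
        | .inl (.inr i) => .inr i
        | .inr i => .inl (.inr (.inr i))
      invFun := fun
        | .inl (.inl i) => .inl (.inl (.inl i))
        | .inl (.inr (.inl i)) => .inl (.inl (.inr i))
        | .inl (.inr (.inr i)) => .inr i
        | .inr i => .inl (.inr i)
      left_inv := by rintro (((_ | _) | _) | _) <;> rfl
      right_inv := by rintro ((_ | _ | _) | _) <;> rfl }
  let τ : (c₁ ⊕ c₂) ⊕ (c₃ ⊕ r₃) ≃ (c₁ ⊕ (c₂ ⊕ c₃)) ⊕ r₃ :=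
    (Equiv.sumAssoc _ _ _).trans <|
      ((Equiv.refl c₁).sumCongr (Equiv.sumAssoc _ _ _).symm).trans (Equiv.sumAssoc _ _ _).symm
  have hperm : fromBlocks (fromRows (fromBlocks X Y₁₂ 0 P) 0) (fromRows (fromBlocks Y₁₃ Y₁₄ B₂ Y₂₄)
        (fromCols 0 B₃)) (fromCols 0 C₂) (fromCols D₂ Y₄₄) =
      (fromBlocks (fromBlocks X (fromCols Y₁₂ Y₁₃) 0 (fromBlocks P B₂ C₂ D₂))
        (fromRows Y₁₄ (fromRows Y₂₄ Y₄₄)) 0 B₃).submatrix σ τ := by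
    ext (((_ | _) | _) | _) ((_ | _) | (_ | _)) <;> rfl
  rw [hperm, rank_submatrix, rank_fromBlocks_zero₂₁_of_isUnit_det _ _ _ hB₃,
    rank_fromBlocks_zero₂₁_of_rank_eq_card _ _ _ hX]
  ring

end Matrix

theorem isUnit_det_constMat {F : Type*} [Field F] {a : ℕ} {M : Matrix (Fin a) (Fin a) F}
    (hM : IsUnit M.det) : IsUnit (constMat M).det := by
  rw [constMat, ← RingHom.mapMatrix_apply, ← RingHom.map_det]
  exact hM.map _

theorem normal_rank_from_special_klf_general (F : Type*) [Field F]
    (n p m n₁ n₂ n₃ q₁ w : ℕ)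
    (A E : Matrix (Fin n) (Fin n) F) (B : Matrix (Fin n) (Fin m) F)
    (C : Matrix (Fin p) (Fin n) F) (D : Matrix (Fin p) (Fin m) F)
    (hreg : (pencil A E).det ≠ 0)
    (G : Matrix (Fin p) (Fin m) (RatFunc F))
    (hG : G = constMat C * ((RatFunc.X : RatFunc F) • constMat E - constMat A)⁻¹
            * constMat B + constMat D)
    -- the constant transformation matrices
    (U : Matrix (Fin n) (Fin n) F) (hU : IsUnit U.det)
    (Z : Matrix (Fin n ⊕ Fin m) ((Fin q₁ ⊕ Fin n₂) ⊕ (Fin w ⊕ Fin n₃)) F)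
    (Zi : Matrix ((Fin q₁ ⊕ Fin n₂) ⊕ (Fin w ⊕ Fin n₃)) (Fin n ⊕ Fin m) F)
    (hZ : Z * Zi = 1 ∧ Zi * Z = 1)
    (e : Fin n ≃ (Fin n₁ ⊕ Fin n₂) ⊕ Fin n₃)
    -- the blocks of the reduced pencil
    (A₁ E₁ : Matrix (Fin n₁) (Fin q₁) F) (A₂ E₂ : Matrix (Fin n₂) (Fin n₂) F)
    (B₂ : Matrix (Fin n₂) (Fin w) F) (B₃ : Matrix (Fin n₃) (Fin n₃) F)
    (C₂ : Matrix (Fin p) (Fin n₂) F) (D₂ : Matrix (Fin p) (Fin w) F)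
    (Y₁₂ : Matrix (Fin n₁) (Fin n₂) (RatFunc F))
    (Y₁₃ : Matrix (Fin n₁) (Fin w) (RatFunc F))
    (Y₁₄ : Matrix (Fin n₁) (Fin n₃) (RatFunc F))
    (Y₂₄ : Matrix (Fin n₂) (Fin n₃) (RatFunc F))
    (Y₄₄ : Matrix (Fin p) (Fin n₃) (RatFunc F))
    (h₁ : (pencil A₁ E₁).rank = n₁)
    (h₃ : IsUnit B₃.det)
    (hT : Matrix.fromBlocks (constMat U) 0 0 (1 : Matrix (Fin p) (Fin p) (RatFunc F))
          * Matrix.fromBlocks (pencil A E) (constMat B) (constMat C) (constMat D)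
          * (Z.map (algebraMap F (RatFunc F)))
        = (Matrix.fromBlocks
            (Matrix.fromRows (Matrix.fromBlocks (pencil A₁ E₁) Y₁₂ 0 (pencil A₂ E₂)) 0)
            (Matrix.fromRows (Matrix.fromBlocks Y₁₃ Y₁₄ (constMat B₂) Y₂₄)
              (Matrix.fromCols 0 (constMat B₃)))
            (Matrix.fromCols 0 (constMat C₂))
            (Matrix.fromCols (constMat D₂) Y₄₄)).submatrix
            (Equiv.sumCongr e (Equiv.refl (Fin p))) _root_.id) :
    G.rank + n₂ =
      (Matrix.fromBlocks (pencil A₂ E₂) (constMat B₂) (constMat C₂) (constMat D₂)).rank := by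
  have hP : IsUnit (pencil A E).det := isUnit_iff_ne_zero.mpr hreg
  have hG_schur : G = constMat D - constMat C * (pencil A E)⁻¹ * constMat B := by
    have hneg : (-pencil A E)⁻¹ = -(pencil A E)⁻¹ :=
      inv_eq_right_inv (by rw [neg_mul_neg, mul_nonsing_inv _ hP])
    rw [hG, ← neg_sub, ← pencil, hneg, Matrix.mul_neg, Matrix.neg_mul, sub_eq_neg_add]
  have hS : (fromBlocks (pencil A E) (constMat B) (constMat C) (constMat D)).rank =
      n + G.rank := by
    rw [rank_fromBlocks_of_isUnit_det₁₁ _ _ _ _ hP, hG_schur, Fintype.card_fin]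
  have hZ_map : Z.map (algebraMap F (RatFunc F)) * Zi.map (algebraMap F (RatFunc F)) = 1 := by
    rw [← Matrix.map_mul, hZ.1, Matrix.map_one _ (map_zero _) (map_one _)]
  have hU_block : IsUnit (fromBlocks (constMat U) 0 0 (1 : Matrix (Fin p) _ (RatFunc F))).det := by
    simpa [det_fromBlocks_zero₂₁] using isUnit_det_constMat hU
  have hrank := congrArg Matrix.rank hT
  rw [rank_mul_eq_left_of_mul_eq_one _ _ _ hZ_map, rank_mul_eq_right_of_isUnit_det _ _ hU_block,
    hS, ← Equiv.coe_refl, rank_submatrix, rank_special_klf (pencil A₁ E₁) Y₁₂ (pencil A₂ E₂) Y₁₃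
      Y₁₄ (constMat B₂) Y₂₄ (constMat B₃) (constMat C₂) (constMat D₂) Y₄₄
      (by rw [h₁, Fintype.card_fin]) (isUnit_det_constMat h₃)] at hrank
  have hn : n = n₁ + n₂ + n₃ := by simpa using Fintype.card_congr e
  simp only [Fintype.card_fin] at hrank
  omega

/-- If the system pencil [[A-λE, B],[C, D]] is reduced by constant invertible
transformations U (on the first n rows) and Z (on the columns) to the special
Kronecker-like block form [[A₁-λE₁, *, *, *],[0, A₂-λE₂, B₂, *],[0,0,0,B₃],
[0, C₂, D₂, *]], with A₁-λE₁ of full row rank over F(λ), A₂-λE₂ regular and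
B₃ invertible, then the normal rank r of G(λ) = C(λE-A)⁻¹B + D equals the
normal rank of [[A₂-λE₂, B₂],[C₂, D₂]] minus n₂. -/
theorem normal_rank_from_special_klf (F : Type*) [Field F]
    (n p m n₁ n₂ n₃ q₁ w : ℕ)
    (A E : Matrix (Fin n) (Fin n) F) (B : Matrix (Fin n) (Fin m) F)
    (C : Matrix (Fin p) (Fin n) F) (D : Matrix (Fin p) (Fin m) F)
    (hreg : (pencil A E).det ≠ 0)
    (G : Matrix (Fin p) (Fin m) (RatFunc F))
    (hG : G = constMat C * ((RatFunc.X : RatFunc F) • constMat E - constMat A)⁻¹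
            * constMat B + constMat D)
    -- the constant transformation matrices
    (U : Matrix (Fin n) (Fin n) F) (hU : IsUnit U.det)
    (Z : Matrix (Fin n ⊕ Fin m) ((Fin q₁ ⊕ Fin n₂) ⊕ (Fin w ⊕ Fin n₃)) F)
    (Zi : Matrix ((Fin q₁ ⊕ Fin n₂) ⊕ (Fin w ⊕ Fin n₃)) (Fin n ⊕ Fin m) F)
    (hZ : Z * Zi = 1 ∧ Zi * Z = 1)
    (e : Fin n ≃ (Fin n₁ ⊕ Fin n₂) ⊕ Fin n₃)
    -- the blocks of the reduced pencil
    (A₁ E₁ : Matrix (Fin n₁) (Fin q₁) F) (A₂ E₂ : Matrix (Fin n₂) (Fin n₂) F)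
    (B₂ : Matrix (Fin n₂) (Fin w) F) (B₃ : Matrix (Fin n₃) (Fin n₃) F)
    (C₂ : Matrix (Fin p) (Fin n₂) F) (D₂ : Matrix (Fin p) (Fin w) F)
    (Y₁₂ : Matrix (Fin n₁) (Fin n₂) (RatFunc F))
    (Y₁₃ : Matrix (Fin n₁) (Fin w) (RatFunc F))
    (Y₁₄ : Matrix (Fin n₁) (Fin n₃) (RatFunc F))
    (Y₂₄ : Matrix (Fin n₂) (Fin n₃) (RatFunc F))
    (Y₄₄ : Matrix (Fin p) (Fin n₃) (RatFunc F))
    (h₁ : (pencil A₁ E₁).rank = n₁)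
    (h₂ : (pencil A₂ E₂).det ≠ 0)
    (h₃ : IsUnit B₃.det)
    (hT : Matrix.fromBlocks (constMat U) 0 0 (1 : Matrix (Fin p) (Fin p) (RatFunc F))
          * Matrix.fromBlocks (pencil A E) (constMat B) (constMat C) (constMat D)
          * (Z.map (algebraMap F (RatFunc F)))
        = (Matrix.fromBlocks
            (Matrix.fromRows (Matrix.fromBlocks (pencil A₁ E₁) Y₁₂ 0 (pencil A₂ E₂)) 0)
            (Matrix.fromRows (Matrix.fromBlocks Y₁₃ Y₁₄ (constMat B₂) Y₂₄)
              (Matrix.fromCols 0 (constMat B₃)))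
            (Matrix.fromCols 0 (constMat C₂))
            (Matrix.fromCols (constMat D₂) Y₄₄)).submatrix
            (Equiv.sumCongr e (Equiv.refl (Fin p))) _root_.id) :
    G.rank + n₂ =
      (Matrix.fromBlocks (pencil A₂ E₂) (constMat B₂) (constMat C₂) (constMat D₂)).rank :=
  normal_rank_from_special_klf_general F n p m n₁ n₂ n₃ q₁ w A E B C D hreg G hG U hU Z Zi hZ e A₁
    E₁ A₂ E₂ B₂ B₃ C₂ D₂ Y₁₂ Y₁₃ Y₁₄ Y₂₄ Y₄₄ h₁ h₃ hT
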